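/- Let X = {xₘ} ⊂ (−1,1) and suppose for every choice of signs sₘ ∈ {−1, +1} there exists a real algebraic polynomial P of degree ≤ N with P(xₘ) = sₘ for all m and |P(x)| < 1 for x ∈ [−1,1] \ X. Then any real measure f = Σₘ cₘ δ_{xₘ} (cₘ ∈ ℝ) is the unique real Borel measure g on [−1,1] of minimal TV norm satisfying ∫ x^k dg = ∫ x^k df for 0 ≤ k ≤ N. -/

import Mathlib

/-!
Take the certificate `P` interpolating the signs of the weights `cₘ`. Since `g` and `f` have the
same moments up to degree `N`, `∫ P dg = ∫ P df = ∑ |cₘ| ≥ ‖f‖`, while `∫ P dg ≤ ‖g‖` because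
`|P| ≤ 1` on `[-1, 1]`. If moreover `‖g‖ ≤ ‖f‖`, both Jordan parts of `g` integrate `1 ∓ P` to
zero, so they live where `P = ±1`, that is on the nodes `xₘ`. The mass of `g` at `xₘ` is then
`∫ Qₘ dg = ∫ Qₘ df = cₘ`, where `Qₘ` is half the difference of the certificates for the all-ones
signs and for the signs flipped at `m` only.
-/

open MeasureTheory

noncomputable def sTVNorm {α : Type*} [MeasurableSpace α] (v : VectorMeasure α ℝ) : ℝ :=
  sSup {r : ℝ | ∃ P : Finset (Set α), (∀ B ∈ P, MeasurableSet B) ∧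
    ((P : Set (Set α)).PairwiseDisjoint id) ∧ r = ∑ B ∈ P, |v B|}

noncomputable def sInt {α : Type*} [MeasurableSpace α] (μ : SignedMeasure α) (g : α → ℝ) : ℝ :=
  (∫ a, g a ∂μ.toJordanDecomposition.posPart) - ∫ a, g a ∂μ.toJordanDecomposition.negPart

open Finset Polynomial

section
variable {α : Type*} [MeasurableSpace α]

theorem sTVNorm_eq_totalVariation (v : SignedMeasure α) :
    sTVNorm v = v.totalVariation.real Set.univ := by
  have hfin : v.variation Set.univ ≠ ⊤ := by
    rw [← v.totalVariation_eq_variation]; finiteness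
  have hsum : ∀ P : Finset (Set α), (∑ B ∈ P, ‖v B‖ₑ).toReal = ∑ B ∈ P, |v B| := fun P => by
    rw [ENNReal.toReal_sum fun _ _ => enorm_ne_top]; simp
  rw [v.totalVariation_eq_variation, measureReal_def]
  refine csSup_eq_of_forall_le_of_forall_lt_exists_gt ⟨0, ∅, by simp, by simp, by simp⟩ ?_ ?_
  · rintro r ⟨P, -, hPd, rfl⟩
    rw [← hsum]
    exact ENNReal.toReal_mono hfin <|
      v.le_variation MeasurableSet.univ (fun _ _ => Set.subset_univ _) hPd
  · intro w hw
    have hε := half_pos (sub_pos.2 hw)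
    obtain ⟨P, -, hPd, hPm, hle⟩ :=
      v.exists_variation_le_add' MeasurableSet.univ (ENNReal.ofReal_pos.2 hε) hfin
    refine ⟨∑ B ∈ P, |v B|, ⟨P, hPm, hPd, rfl⟩, ?_⟩
    have hne : ∑ B ∈ P, ‖v B‖ₑ ≠ ⊤ := ENNReal.sum_ne_top.2 fun _ _ => enorm_ne_top
    have := ENNReal.toReal_mono (ENNReal.add_ne_top.2 ⟨hne, ENNReal.ofReal_ne_top⟩) hle
    rw [ENNReal.toReal_add hne ENNReal.ofReal_ne_top, hsum, ENNReal.toReal_ofReal hε.le] at this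
    linarith

theorem sInt_indicator_one (v : SignedMeasure α) {B : Set α} (hB : MeasurableSet B) :
    sInt v (B.indicator 1) = v B := by
  rw [sInt, integral_indicator_one hB, integral_indicator_one hB,
    v.apply_eq_posPart_real_sub_negPart_real hB]

theorem integral_le_measureReal_univ (μ : Measure α) [IsFiniteMeasure μ] {h : α → ℝ}
    (hh : ∀ a, |h a| ≤ 1) : ∫ a, h a ∂μ ≤ μ.real Set.univ := by
  have := norm_integral_le_of_norm_le_const (μ := μ) (C := 1) (f := h) (.of_forall hh)
  rw [Real.norm_eq_abs, one_mul] at this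
  exact (le_abs_self _).trans this

theorem sInt_le_totalVariation (v : SignedMeasure α) {h : α → ℝ} (hh : ∀ a, |h a| ≤ 1) :
    sInt v h ≤ v.totalVariation.real Set.univ := by
  have hneg := integral_le_measureReal_univ v.toJordanDecomposition.negPart (h := (- h ·))
    (by simpa using hh)
  rw [integral_neg] at hneg
  rw [sInt, SignedMeasure.totalVariation, measureReal_add_apply]
  linarith [integral_le_measureReal_univ v.toJordanDecomposition.posPart hh]

theorem measure_lt_one_eq_zero_of_measureReal_univ_le_integral (μ : Measure α)
    [IsFiniteMeasure μ] {h : α → ℝ} (hm : Measurable h) (hh : ∀ a, |h a| ≤ 1)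
    (hμ : μ.real Set.univ ≤ ∫ a, h a ∂μ) : μ {a | h a < 1} = 0 := by
  have hint : Integrable h μ := .of_bound hm.aestronglyMeasurable 1 (.of_forall hh)
  have hnonneg : 0 ≤ fun a => 1 - h a := fun a => sub_nonneg.2 (le_of_abs_le (hh a))
  have hzero : ∫ a, (1 - h a) ∂μ = 0 := by
    refine le_antisymm ?_ (integral_nonneg hnonneg)
    rw [integral_sub (integrable_const 1) hint, integral_const, smul_eq_mul, mul_one]
    linarith
  have hae := (integral_eq_zero_iff_of_nonneg hnonneg ((integrable_const 1).sub hint)).1 hzero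
  simpa using ae_iff.1 (hae.mono fun a ha => (sub_eq_zero.1 ha).symm.ge)

theorem totalVariation_eq_zero_of_le_sInt (v : SignedMeasure α) {h : α → ℝ} (hm : Measurable h)
    (hh : ∀ a, |h a| ≤ 1) (hv : v.totalVariation.real Set.univ ≤ sInt v h) {t : Set α}
    (ht : ∀ a ∈ t, |h a| < 1) : v.totalVariation t = 0 := by
  set p := v.toJordanDecomposition.posPart
  set n := v.toJordanDecomposition.negPart
  have hh' : ∀ a, |-h a| ≤ 1 := by simpa using hh
  have hp := integral_le_measureReal_univ p hh
  have hn := integral_le_measureReal_univ n hh'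
  rw [sInt, SignedMeasure.totalVariation, measureReal_add_apply] at hv
  rw [integral_neg] at hn
  have hp0 := measure_lt_one_eq_zero_of_measureReal_univ_le_integral p hm hh (by linarith)
  have hn0 := measure_lt_one_eq_zero_of_measureReal_univ_le_integral n (h := (-h ·)) hm.neg hh'
    (by rw [integral_neg]; linarith)
  rw [SignedMeasure.totalVariation, Measure.add_apply,
    measure_mono_null (fun a ha => (abs_lt.1 (ht a ha)).2) hp0,
    measure_mono_null (fun a ha => neg_lt.1 (abs_lt.1 (ht a ha)).1) hn0, add_zero]

variable [MeasurableSingletonClass α]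

theorem integral_eq_sum_of_measure_compl_eq_zero {μ : Measure α} [IsFiniteMeasure μ]
    {s : Finset α} (hμ : μ (↑s)ᶜ = 0) (h : α → ℝ) :
    ∫ a, h a ∂μ = ∑ a ∈ s, μ.real {a} * h a := by
  have hint : IntegrableOn h s μ := by
    rw [show (s : Set α) = ⋃ a ∈ s, {a} by ext; simp]
    exact integrableOn_finset_iUnion.2 fun a _ => integrableOn_singleton
  conv_lhs => rw [← Measure.restrict_eq_self_of_ae_mem (mem_ae_iff.2 hμ)]
  exact setIntegral_finset s hint

theorem sInt_eq_sum_of_totalVariation_compl_eq_zero {v : SignedMeasure α} {s : Finset α}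
    (hv : v.totalVariation (↑s)ᶜ = 0) (h : α → ℝ) :
    sInt v h = ∑ a ∈ s, v {a} * h a := by
  rw [SignedMeasure.totalVariation, Measure.add_apply, add_eq_zero] at hv
  rw [sInt, integral_eq_sum_of_measure_compl_eq_zero hv.1,
    integral_eq_sum_of_measure_compl_eq_zero hv.2, ← sum_sub_distrib]
  refine sum_congr rfl fun a _ => ?_
  rw [v.apply_eq_posPart_real_sub_negPart_real (measurableSet_singleton a), sub_mul]

theorem SignedMeasure.ext_of_totalVariation_compl_eq_zero {v w : SignedMeasure α} {s : Finset α}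
    (hv : v.totalVariation (↑s)ᶜ = 0) (hw : w.totalVariation (↑s)ᶜ = 0)
    (hvw : ∀ a ∈ s, v {a} = w {a}) : v = w :=
  VectorMeasure.ext fun B hB => by
    rw [← sInt_indicator_one v hB, ← sInt_indicator_one w hB,
      sInt_eq_sum_of_totalVariation_compl_eq_zero hv,
      sInt_eq_sum_of_totalVariation_compl_eq_zero hw]
    exact sum_congr rfl fun a ha => by rw [hvw a ha]

end

section
variable {α ι : Type*} [MeasurableSpace α] [Fintype ι]

theorem totalVariation_sum_smul_dirac_le (c : ι → ℝ) (x : ι → α) :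
    (∑ i, c i • (Measure.dirac (x i)).toSignedMeasure).totalVariation ≤
      ∑ i, ENNReal.ofReal |c i| • Measure.dirac (x i) := by
  rw [SignedMeasure.totalVariation_eq_variation]
  refine (VectorMeasure.variation_finsetSum_le _ _).trans
    (le_of_eq (sum_congr rfl fun i _ => ?_))
  rw [VectorMeasure.variation_smul, Measure.variation_toSignedMeasure, ← Measure.coe_nnreal_smul,
    ← enorm_eq_nnnorm, Real.enorm_eq_ofReal_abs]

theorem sTVNorm_sum_smul_dirac_le (c : ι → ℝ) (x : ι → α) :
    sTVNorm (∑ i, c i • (Measure.dirac (x i)).toSignedMeasure) ≤ ∑ i, |c i| := by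
  rw [sTVNorm_eq_totalVariation, measureReal_def]
  refine (ENNReal.toReal_mono (by simp) (totalVariation_sum_smul_dirac_le c x _)).trans ?_
  simp [ENNReal.toReal_sum]

variable [MeasurableSingletonClass α]

theorem totalVariation_sum_smul_dirac_compl_image_eq_zero [DecidableEq α] (c : ι → ℝ)
    (x : ι → α) :
    (∑ i, c i • (Measure.dirac (x i)).toSignedMeasure).totalVariation (↑(univ.image x))ᶜ = 0 :=
  le_zero_iff.1 <| (totalVariation_sum_smul_dirac_le c x _).trans (by simp)

variable {x : ι → α} (hx : Function.Injective x)
include hx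

theorem sum_smul_dirac_apply_singleton (c : ι → ℝ) (j : ι) :
    (∑ i, c i • (Measure.dirac (x i)).toSignedMeasure) {x j} = c j := by
  rw [FunLike.coe_sum, Finset.sum_apply, sum_eq_single j]
  · simp [measureReal_def]
  · exact fun i _ hij => by simp [measureReal_def, hx.ne hij]
  · simp

theorem SignedMeasure.ext_of_sInt_eq_on_lagrangeBasis [DecidableEq α] [DecidableEq ι]
    {v w : SignedMeasure α} (hv : v.totalVariation (↑(univ.image x))ᶜ = 0)
    (hw : w.totalVariation (↑(univ.image x))ᶜ = 0)
    (hvw : ∀ j, ∃ q : α → ℝ, sInt v q = sInt w q ∧ ∀ i, q (x i) = (Pi.single j 1 : ι → ℝ) i) :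
    v = w := by
  refine ext_of_totalVariation_compl_eq_zero hv hw ?_
  simp only [mem_image, mem_univ, true_and, forall_exists_index, forall_apply_eq_imp_iff]
  intro j
  obtain ⟨q, hq, hqx⟩ := hvw j
  rw [sInt_eq_sum_of_totalVariation_compl_eq_zero hv,
    sInt_eq_sum_of_totalVariation_compl_eq_zero hw, sum_image hx.injOn, sum_image hx.injOn] at hq
  simpa [hqx, Pi.single_apply] using hq

theorem sInt_sum_smul_dirac (c : ι → ℝ) (h : α → ℝ) :
    sInt (∑ i, c i • (Measure.dirac (x i)).toSignedMeasure) h = ∑ i, c i * h (x i) := by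
  classical
  rw [sInt_eq_sum_of_totalVariation_compl_eq_zero
      (totalVariation_sum_smul_dirac_compl_image_eq_zero c x), sum_image hx.injOn]
  simp only [sum_smul_dirac_apply_singleton hx]

end

section
variable {α : Type*} [TopologicalSpace α] [CompactSpace α] [MeasurableSpace α]
  [OpensMeasurableSpace α]

theorem sInt_eval_eq_sum_coeff_mul (v : SignedMeasure α) {φ : α → ℝ} (hφ : Continuous φ)
    {N : ℕ} {P : ℝ[X]} (hP : P.natDegree ≤ N) :
    sInt v (fun a => P.eval (φ a)) =
      ∑ k ∈ range (N + 1), P.coeff k * sInt v (fun a => φ a ^ k) := by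
  have key : ∀ (μ : Measure α) [IsFiniteMeasure μ], ∫ a, P.eval (φ a) ∂μ =
      ∑ k ∈ range (N + 1), P.coeff k * ∫ a, φ a ^ k ∂μ := fun μ _ => by
    simp_rw [eval_eq_sum_range' (Nat.lt_succ_of_le hP), ← integral_const_mul]
    exact integral_finsetSum _ fun k _ =>
      (continuous_const.mul (hφ.pow k)).integrable_of_hasCompactSupport (.of_compactSpace _)
  rw [sInt, key, key, ← sum_sub_distrib]
  simp only [sInt, mul_sub]

theorem sInt_eval_eq_of_moments_eq {v w : SignedMeasure α} {φ : α → ℝ} (hφ : Continuous φ)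
    {N : ℕ} (hvw : ∀ k ≤ N, sInt v (fun a => φ a ^ k) = sInt w (fun a => φ a ^ k))
    {P : ℝ[X]} (hP : P.natDegree ≤ N) :
    sInt v (fun a => P.eval (φ a)) = sInt w (fun a => P.eval (φ a)) := by
  rw [sInt_eval_eq_sum_coeff_mul v hφ hP, sInt_eval_eq_sum_coeff_mul w hφ hP]
  exact sum_congr rfl fun k hk => by rw [hvw k (Nat.lt_succ_iff.1 (mem_range.1 hk))]

end

theorem exists_eval_eq_pi_single_of_forall_signs {ι : Type*} [DecidableEq ι] {N : ℕ}
    {t : ι → ℝ} (h : ∀ s : ι → ℝ, (∀ i, s i = 1 ∨ s i = -1) →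
      ∃ P : ℝ[X], P.natDegree ≤ N ∧ ∀ i, P.eval (t i) = s i) (j : ι) :
    ∃ Q : ℝ[X], Q.natDegree ≤ N ∧ ∀ i, Q.eval (t i) = (Pi.single j 1 : ι → ℝ) i := by
  obtain ⟨P₁, hP₁, hP₁t⟩ := h 1 fun _ => Or.inl rfl
  obtain ⟨P₂, hP₂, hP₂t⟩ := h (1 - 2 • Pi.single j 1) fun i => by
    by_cases hij : i = j <;> norm_num [hij]
  refine ⟨C (1 / 2) * (P₁ - P₂), (natDegree_C_mul_le _ _).trans
    ((natDegree_sub_le _ _).trans (max_le hP₁ hP₂)), fun i => ?_⟩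
  simp only [eval_mul, eval_C, eval_sub, hP₁t, hP₂t]
  simp

theorem exists_sign_certificate {ι : Type*} {N : ℕ} {S : Set ℝ} {t : ι → ℝ}
    (h : ∀ s : ι → ℝ, (∀ i, s i = 1 ∨ s i = -1) →
      ∃ P : ℝ[X], P.natDegree ≤ N ∧ (∀ i, P.eval (t i) = s i) ∧
        ∀ y ∈ S, y ∉ Set.range t → |P.eval y| < 1) (c : ι → ℝ) :
    ∃ P : ℝ[X], P.natDegree ≤ N ∧ (∀ i, c i * P.eval (t i) = |c i|) ∧
      (∀ y ∈ S, |P.eval y| ≤ 1) ∧ ∀ y ∈ S, y ∉ Set.range t → |P.eval y| < 1 := by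
  obtain ⟨P, hPdeg, hPt, hPlt⟩ := h (fun i => if 0 ≤ c i then 1 else -1)
    fun i => by split_ifs <;> simp
  refine ⟨P, hPdeg, fun i => ?_, fun y hy => ?_, hPlt⟩
  · rw [hPt]
    split_ifs with hc <;> simp [abs_of_nonneg, abs_of_neg, not_le.1, hc]
  · by_cases hyt : y ∈ Set.range t
    · obtain ⟨i, rfl⟩ := hyt
      rw [hPt]
      split_ifs <;> simp
    · exact (hPlt y hy hyt).le

theorem real_dual_certificate_general {M N : ℕ}
    (x : Fin M → (Set.Icc (-1 : ℝ) 1)) (hx : Function.Injective x)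
    (hcert : ∀ s : Fin M → ℝ, (∀ m, s m = 1 ∨ s m = -1) →
      ∃ P : Polynomial ℝ, P.natDegree ≤ N ∧ (∀ m, P.eval (x m : ℝ) = s m) ∧
        ∀ y ∈ Set.Icc (-1 : ℝ) 1, y ∉ Set.range (fun m => (x m : ℝ)) → |P.eval y| < 1)
    (c : Fin M → ℝ) (f : SignedMeasure (Set.Icc (-1 : ℝ) 1))
    (hf : f = ∑ m, c m • (Measure.dirac (x m)).toSignedMeasure) :
    ∀ g : SignedMeasure (Set.Icc (-1 : ℝ) 1),
      (∀ k ≤ N, sInt g (fun a => (a : ℝ) ^ k) = sInt f (fun a => (a : ℝ) ^ k)) →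
      sTVNorm f ≤ sTVNorm g ∧ (sTVNorm g ≤ sTVNorm f → g = f) := by
  classical
  subst hf
  intro g hmom
  obtain ⟨P, hPdeg, hPc, hPS, hPlt⟩ := exists_sign_certificate hcert c
  have hP1 : ∀ a : Set.Icc (-1 : ℝ) 1, |P.eval (a : ℝ)| ≤ 1 := fun a => hPS a a.2
  have hgP : sInt g (fun a => P.eval (a : ℝ)) = ∑ m, |c m| := by
    rw [sInt_eval_eq_of_moments_eq continuous_subtype_val hmom hPdeg, sInt_sum_smul_dirac hx]
    exact sum_congr rfl fun m _ => hPc m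
  have hTVg : ∑ m, |c m| ≤ sTVNorm g := by
    rw [sTVNorm_eq_totalVariation, ← hgP]
    exact sInt_le_totalVariation g hP1
  refine ⟨(sTVNorm_sum_smul_dirac_le c x).trans hTVg, fun hle => ?_⟩
  have hgX : g.totalVariation (↑(univ.image x))ᶜ = 0 := by
    refine totalVariation_eq_zero_of_le_sInt g (h := fun a => P.eval (a : ℝ))
      (P.continuous.comp continuous_subtype_val).measurable hP1 ?_ fun a ha => hPlt a a.2 ?_
    · rw [← sTVNorm_eq_totalVariation, hgP]
      linarith [sTVNorm_sum_smul_dirac_le c x]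
    · rintro ⟨m, hm⟩
      exact ha (by simp [← Subtype.ext hm])
  refine SignedMeasure.ext_of_sInt_eq_on_lagrangeBasis hx hgX
    (totalVariation_sum_smul_dirac_compl_image_eq_zero c x) fun j => ?_
  obtain ⟨Q, hQdeg, hQx⟩ := exists_eval_eq_pi_single_of_forall_signs
    (fun s hs => (hcert s hs).imp fun _ hP => ⟨hP.1, hP.2.1⟩) j
  exact ⟨_, sInt_eval_eq_of_moments_eq continuous_subtype_val hmom hQdeg, hQx⟩

/-- real dual certificate. If for every choice of signs `sₘ ∈ {±1}`
there is a real polynomial `P` of degree `≤ N` with `P(xₘ) = sₘ` and `|P| < 1` on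
`[−1,1] \ X`, then any real measure `f = ∑ₘ cₘ δ_{xₘ}` is the unique real Borel measure
on `[−1,1]` of minimal TV norm matching the moments `∫ x^k dg`, `0 ≤ k ≤ N`. -/
theorem real_dual_certificate {M N : ℕ}
    (x : Fin M → (Set.Icc (-1 : ℝ) 1)) (hx : Function.Injective x)
    (hxint : ∀ m, (x m : ℝ) ∈ Set.Ioo (-1 : ℝ) 1)
    (hcert : ∀ s : Fin M → ℝ, (∀ m, s m = 1 ∨ s m = -1) →
      ∃ P : Polynomial ℝ, P.natDegree ≤ N ∧ (∀ m, P.eval (x m : ℝ) = s m) ∧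
        ∀ y ∈ Set.Icc (-1 : ℝ) 1, y ∉ Set.range (fun m => (x m : ℝ)) → |P.eval y| < 1)
    (c : Fin M → ℝ) (f : SignedMeasure (Set.Icc (-1 : ℝ) 1))
    (hf : f = ∑ m, c m • (Measure.dirac (x m)).toSignedMeasure) :
    ∀ g : SignedMeasure (Set.Icc (-1 : ℝ) 1),
      (∀ k ≤ N, sInt g (fun a => (a : ℝ) ^ k) = sInt f (fun a => (a : ℝ) ^ k)) →
      sTVNorm f ≤ sTVNorm g ∧ (sTVNorm g ≤ sTVNorm f → g = f) :=
  real_dual_certificate_general x hx hcert c f hf
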